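/- arXiv:2005.01570 — 7 statements merged into one kernel-verified Lean document; each statement's English description precedes it below -/
import Mathlib

section
/- Let X be a metric space, F : X ⇉ X a multifunction, and A ⊆ X a compact Lyapunov stable set. If (x_n) is a sequence with x_{n+1} ∈ F(x_n) whose closure is compact and which has a limit point in A, then every limit point of (x_n) lies in A; that is, ⋂_{N} closure{x_n : n ≥ N} ⊆ A. -/
open Metric Set

/-- Lower semicontinuity of a multifunction: the lower pre-image of every open set is open. -/
def LSC {X Y : Type*} [TopologicalSpace X] [TopologicalSpace Y] (F : X → Set Y) : Prop :=
  ∀ V : Set Y, IsOpen V → IsOpen {x | (F x ∩ V).Nonempty}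

/-- Upper semicontinuity of a multifunction: the upper pre-image of every open set is open. -/
def USC {X Y : Type*} [TopologicalSpace X] [TopologicalSpace Y] (F : X → Set Y) : Prop :=
  ∀ V : Set Y, IsOpen V → IsOpen {x | F x ⊆ V}

/-- Image of a set under a multifunction. -/
def img {X Y : Type*} (F : X → Set Y) (S : Set X) : Set Y := ⋃ s ∈ S, F s

/-- n-fold composition of a multifunction, applied to a point. -/
def iter {X : Type*} (F : X → Set X) : ℕ → X → Set X
  | 0, x => {x}
  | n + 1, x => img F (iter F n x)

/-- The reachable set from a point. -/
def reach {X : Type*} (F : X → Set X) (x : X) : Set X := ⋃ n, iter F n x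

/-- The δ-perturbed multifunction F_δ(x) = B_δ(F(x)). -/
noncomputable def pert {X : Type*} [PseudoEMetricSpace X] (F : X → Set X) (δ : ℝ) (x : X) :
    Set X := Metric.thickening δ (F x)

/-- The chain reachable set from a point. -/
noncomputable def chainReach {X : Type*} [PseudoEMetricSpace X] (F : X → Set X) (x : X) :
    Set X := ⋂ ε > (0 : ℝ), reach (pert F ε) x

/-- A set is sub-invariant if F(A) ⊆ A. -/
def SubInv {X : Type*} (F : X → Set X) (A : Set X) : Prop := img F A ⊆ A

/-- A minimal set: nonempty, closed, sub-invariant, and minimal among such sets. -/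
def MinimalSet {X : Type*} [TopologicalSpace X] (F : X → Set X) (A : Set X) : Prop :=
  A.Nonempty ∧ IsClosed A ∧ SubInv F A ∧
    ∀ B ⊆ A, B.Nonempty → IsClosed B → SubInv F B → B = A

/-- Lyapunov stability of a set. -/
def LyapStable {X : Type*} [TopologicalSpace X] (F : X → Set X) (A : Set X) : Prop :=
  ∀ V : Set X, IsOpen V → A ⊆ V → ∃ W : Set X, IsOpen W ∧ A ⊆ W ∧ img (reach F) W ⊆ V

theorem stmt8 {X : Type*} [MetricSpace X] (F : X → Set X) (A : Set X)
    (hA : IsCompact A) (hstab : LyapStable F A)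
    (x : ℕ → X) (hx : ∀ n, x (n + 1) ∈ F (x n))
    (hc : IsCompact (closure (Set.range x)))
    (hmeet : (closure (Set.range x) ∩ A).Nonempty) :
    ⋂ N : ℕ, closure (x '' {n | N ≤ n}) ⊆ A := by
  obtain ⟨z, hzc, hzA⟩ := hmeet
  intro y hy
  by_contra hyA
  have hne : A.Nonempty := ⟨z, hzA⟩
  have hr : 0 < infDist y A := (hA.isClosed.notMem_iff_infDist_pos hne).mp hyA
  set r := infDist y A with hrdef
  -- V is the open (r/2)-thickening of A
  have hVopen : IsOpen (Metric.thickening (r/2) A) := isOpen_thickening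
  have hAV : A ⊆ Metric.thickening (r/2) A := self_subset_thickening (by linarith) A
  obtain ⟨W, hWopen, hAW, hWreach⟩ := hstab _ hVopen hAV
  by_cases hcase : ∃ n, x n ∈ W
  · obtain ⟨n, hn⟩ := hcase
    have hiter : ∀ k, x (n + k) ∈ iter F k (x n) := by
      intro k
      induction k with
      | zero => simp [iter]
      | succ k ih =>
        show x (n + k + 1) ∈ img F (iter F k (x n))
        exact mem_biUnion ih (hx (n + k))
    have hV : ∀ m, n ≤ m → x m ∈ Metric.thickening (r/2) A := by
      intro m hm
      apply hWreach
      refine mem_biUnion hn ?_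
      have : x m = x (n + (m - n)) := by rw [Nat.add_sub_cancel' hm]
      rw [this]
      exact mem_iUnion.mpr ⟨m - n, hiter (m - n)⟩
    have hyV : y ∈ closure (Metric.thickening (r/2) A) := by
      have hy' : y ∈ closure (x '' {m | n ≤ m}) := mem_iInter.mp hy n
      refine closure_mono ?_ hy'
      rintro _ ⟨m, hm, rfl⟩
      exact hV m hm
    have hyc : y ∈ Metric.cthickening (r/2) A :=
      closure_thickening_subset_cthickening _ _ hyV
    have : y ∈ Metric.thickening r A :=
      cthickening_subset_thickening' hr (by linarith) A hyc
    rw [mem_thickening_iff_infDist_lt hne] at this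
    exact lt_irrefl r (hrdef ▸ this)
  · push_neg at hcase
    have : closure (Set.range x) ⊆ Wᶜ := by
      apply closure_minimal _ hWopen.isClosed_compl
      rintro _ ⟨n, rfl⟩
      exact hcase n
    exact this hzc (hAW hzA)
end

section
/- Let X be a metric space, f : X → X continuous, and A a compact Lyapunov stable minimal set of f. If x ∈ X is such that closure of the orbit {f^{∘n}(x) : n ∈ ℕ} is compact and intersects A, then the ω-limit set ⋂_N closure{f^{∘n}(x) : n ≥ N} equals A. -/
open Metric Set

private lemma iter_single' {X : Type*} (f : X → X) (k : ℕ) (z : X) :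
    iter (fun z => {f z}) k z = {f^[k] z} := by
  induction k with
  | zero => rfl
  | succ n ih =>
    simp only [iter, ih, img, mem_singleton_iff, iUnion_iUnion_eq_left,
      Function.iterate_succ_apply']

private lemma reach_single' {X : Type*} (f : X → X) (z : X) :
    reach (fun z => {f z}) z = Set.range fun k : ℕ => f^[k] z := by
  ext y
  simp [reach, iter_single', Set.range, eq_comm]

theorem stmt9 {X : Type*} [MetricSpace X] (f : X → X) (hf : Continuous f) (A : Set X)
    (hA : IsCompact A) (hmin : MinimalSet (fun z => {f z}) A)
    (hstab : LyapStable (fun z => {f z}) A) (x : X)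
    (hc : IsCompact (closure (Set.range fun n : ℕ => f^[n] x)))
    (hmeet : (closure (Set.range fun n : ℕ => f^[n] x) ∩ A).Nonempty) :
    ⋂ N : ℕ, closure ((fun n : ℕ => f^[n] x) '' {n | N ≤ n}) = A := by
  set T : ℕ → Set X := fun N => closure ((fun n : ℕ => f^[n] x) '' {n | N ≤ n}) with hT
  have hTmono : ∀ M N, M ≤ N → T N ⊆ T M := fun M N h =>
    closure_mono (image_mono fun n hn => le_trans h hn)
  have hTsub : ∀ N, T N ⊆ closure (Set.range fun n : ℕ => f^[n] x) := fun N =>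
    closure_mono (fun y hy => by rcases hy with ⟨n, _, rfl⟩; exact ⟨n, rfl⟩)
  have hTclosed : ∀ N, IsClosed (T N) := fun N => isClosed_closure
  have hTcompact : ∀ N, IsCompact (T N) := fun N => hc.of_isClosed_subset (hTclosed N) (hTsub N)
  have hTne : ∀ N, (T N).Nonempty := fun N =>
    ⟨f^[N] x, subset_closure ⟨N, le_refl N, rfl⟩⟩
  set ω := ⋂ N, T N with hω
  -- ω is nonempty
  have hωne : ω.Nonempty := by
    apply IsCompact.nonempty_iInter_of_sequence_nonempty_isCompact_isClosed T
      (fun n => hTmono n (n+1) (Nat.le_succ n)) hTne (hTcompact 0) hTclosed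
  -- ω is closed
  have hωclosed : IsClosed ω := isClosed_iInter hTclosed
  -- ω is sub-invariant
  have hωsub : SubInv (fun z => {f z}) ω := by
    intro y hy
    rcases mem_iUnion₂.1 hy with ⟨s, hs, hys⟩
    rcases mem_singleton_iff.1 hys with rfl
    refine mem_iInter.2 fun N => hTmono N (N+1) (Nat.le_succ N) ?_
    have hmaps : MapsTo f ((fun n : ℕ => f^[n] x) '' {n | N ≤ n})
        ((fun n : ℕ => f^[n] x) '' {n | N + 1 ≤ n}) := by
      rintro _ ⟨n, hn, rfl⟩
      exact ⟨n + 1, Nat.succ_le_succ hn, by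
        simp only [Function.iterate_succ_apply']⟩
    have := (hmaps.closure hf) (mem_iInter.1 hs N)
    exact this
  -- ω ⊆ A
  have hωA : ω ⊆ A := by
    intro y hy
    have hyA : ∀ ε > (0:ℝ), ∃ a ∈ A, dist y a < ε := by
      intro ε hε
      have hV : IsOpen (Metric.thickening (ε/2) A) := Metric.isOpen_thickening
      have hAV : A ⊆ Metric.thickening (ε/2) A := Metric.self_subset_thickening (by linarith) A
      obtain ⟨W, hWopen, hAW, hWV⟩ := hstab _ hV hAV
      -- orbit enters W
      obtain ⟨a, ha_cl, haA⟩ := hmeet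
      have haW : a ∈ W := hAW haA
      obtain ⟨z, hzW, n, rfl⟩ := mem_closure_iff_nhds.1 ha_cl W (hWopen.mem_nhds haW)
      -- tail from n lies in the thickening
      have htail : ∀ m, n ≤ m → f^[m] x ∈ Metric.thickening (ε/2) A := by
        intro m hm
        apply hWV
        refine mem_iUnion₂.2 ⟨f^[n] x, hzW, ?_⟩
        rw [reach_single']
        exact ⟨m - n, by
          show f^[m-n] (f^[n] x) = f^[m] x
          rw [← Function.iterate_add_apply, Nat.sub_add_cancel hm]⟩
      have hyT : y ∈ T n := mem_iInter.1 hy n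
      have hTthick : T n ⊆ closure (Metric.thickening (ε/2) A) :=
        closure_mono (by rintro _ ⟨m, hm, rfl⟩; exact htail m hm)
      have hythick : y ∈ closure (Metric.thickening (ε/2) A) := hTthick hyT
      obtain ⟨z, hz, hdz⟩ := Metric.mem_closure_iff.1 hythick (ε/2) (by linarith)
      obtain ⟨a', ha'A, hda'⟩ := Metric.mem_thickening_iff.1 hz
      exact ⟨a', ha'A, by
        calc dist y a' ≤ dist y z + dist z a' := dist_triangle y z a'
        _ < ε/2 + ε/2 := by exact add_lt_add hdz hda'
        _ = ε := by ring⟩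
    have : y ∈ closure A := Metric.mem_closure_iff.2 fun ε hε => hyA ε hε
    rwa [hmin.2.1.closure_eq] at this
  exact hmin.2.2.2 ω hωA hωne hωclosed hωsub
end

section
/- Let X be a metric space and F : X ⇉ X a multifunction. If the reachable-set multifunction x ↦ closure(Reach(F,x)) is upper semicontinuous, then every compact sub-invariant set A (F(A) ⊆ A) is Lyapunov stable. -/
open Metric Set

theorem stmt10 {X : Type*} [MetricSpace X] (F : X → Set X)
    (hne : ∀ x, (F x).Nonempty)
    (husc : USC (fun x => closure (reach F x)))
    (A : Set X) (hA : IsCompact A) (hinv : SubInv F A) :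
    LyapStable F A := by
  intro V hV hAV
  refine ⟨{x | closure (reach F x) ⊆ V}, husc V hV, ?_, ?_⟩
  · intro a ha
    have hiter : ∀ n, iter F n a ⊆ A := by
      intro n
      induction n with
      | zero => intro y hy; rw [iter] at hy; rwa [Set.mem_singleton_iff.mp hy]
      | succ n ih =>
        intro y hy
        apply hinv
        rw [iter, img] at hy
        simp only [mem_iUnion] at hy
        obtain ⟨s, hs, hys⟩ := hy
        exact mem_biUnion (ih hs) hys
    have : reach F a ⊆ A := iUnion_subset hiter
    calc closure (reach F a) ⊆ closure A := closure_mono this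
      _ = A := hA.isClosed.closure_eq
      _ ⊆ V := hAV
  · intro y hy
    rw [img] at hy
    simp only [mem_iUnion] at hy
    obtain ⟨x, hx, hyx⟩ := hy
    exact hx (subset_closure hyx)
end

section
/- Let X be a metric space, F : X ⇉ X lower semicontinuous, and A a minimal set of F. Then the weak basin B(A) := {x ∈ X : A ⊆ closure(Reach(F,x))} equals clR⁻[A] = {x : closure(Reach(F,x)) ∩ A ≠ ∅}. -/
open Metric Set

theorem stmt11 {X : Type*} [MetricSpace X] (F : X → Set X)
    (hne : ∀ x, (F x).Nonempty) (hF : LSC F) (A : Set X) (hA : MinimalSet F A) :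
    {x | A ⊆ closure (reach F x)} = {x | (closure (reach F x) ∩ A).Nonempty} := by
  ext x
  simp only [mem_setOf_eq]
  constructor
  · intro h
    obtain ⟨a, ha⟩ := hA.1
    exact ⟨a, h ha, ha⟩
  · intro hB
    -- reach is sub-invariant
    have hreach : ∀ z ∈ reach F x, F z ⊆ reach F x := by
      intro z hz
      obtain ⟨n, hn⟩ := mem_iUnion.mp hz
      intro w hw
      exact mem_iUnion.mpr ⟨n + 1, mem_biUnion hn hw⟩
    -- closure of reach is sub-invariant, via LSC
    have hcl : ∀ y ∈ closure (reach F x), F y ⊆ closure (reach F x) := by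
      intro y hy v hv
      rw [_root_.mem_closure_iff]
      intro o ho hvo
      have hopen := hF o ho
      have hymem : y ∈ {z | (F z ∩ o).Nonempty} := ⟨v, hv, hvo⟩
      obtain ⟨z, hz1, hz2⟩ := _root_.mem_closure_iff.mp hy _ hopen hymem
      obtain ⟨w, hw1, hw2⟩ := hz1
      exact ⟨w, hw2, hreach z hz2 hw1⟩
    set B := closure (reach F x) ∩ A with hBdef
    have hsub : SubInv F B := by
      rintro w hw
      obtain ⟨z, hz, hwz⟩ := mem_iUnion₂.mp hw
      exact ⟨hcl z hz.1 hwz, hA.2.2.1 (mem_biUnion hz.2 hwz)⟩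
    have := hA.2.2.2 B inter_subset_right hB
      (isClosed_closure.inter hA.2.1) hsub
    intro a ha
    rw [← this] at ha
    exact ha.1
end

section
/- Let X be a metric space, F : X ⇉ X lower semicontinuous, A a minimal set of F, and a ∈ A. Then the weak basin B(A) = {x : A ⊆ closure(Reach(F,x))} equals ⋂_{V ∈ 𝒩(a)} Reach⁻[V], the intersection over all open neighborhoods V of a of {x : Reach(F,x) ∩ V ≠ ∅}. -/
open Metric Set

theorem stmt12 {X : Type*} [MetricSpace X] (F : X → Set X)
    (hne : ∀ x, (F x).Nonempty) (hF : LSC F) (A : Set X) (hA : MinimalSet F A)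
    (a : X) (ha : a ∈ A) :
    {x | A ⊆ closure (reach F x)} =
      ⋂ V ∈ {V : Set X | IsOpen V ∧ a ∈ V}, {x | (reach F x ∩ V).Nonempty} := by
  have step : ∀ x z w, z ∈ reach F x → w ∈ F z → w ∈ reach F x := by
    intro x z w hz hw
    obtain ⟨n, hn⟩ := mem_iUnion.1 hz
    exact mem_iUnion.2 ⟨n + 1, mem_iUnion₂.2 ⟨z, hn, hw⟩⟩
  ext x
  simp only [mem_setOf_eq, mem_iInter]
  constructor
  · intro hsub V hV
    have : a ∈ closure (reach F x) := hsub ha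
    rcases _root_.mem_closure_iff.1 this V hV.1 hV.2 with ⟨y, hy1, hy2⟩
    exact ⟨y, hy2, hy1⟩
  · intro h
    -- closure of reach is sub-invariant
    have hinv : SubInv F (closure (reach F x)) := by
      intro w hw
      rcases mem_iUnion₂.1 hw with ⟨b, hb, hwb⟩
      rw [_root_.mem_closure_iff]
      intro V hV hwV
      have hbU : b ∈ {z | (F z ∩ V).Nonempty} := ⟨w, hwb, hwV⟩
      rcases _root_.mem_closure_iff.1 hb _ (hF V hV) hbU with ⟨z, hz1, hz2⟩
      rcases hz1 with ⟨u, hu, huV⟩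
      exact ⟨u, huV, step x z u hz2 hu⟩
    have haC : a ∈ closure (reach F x) := by
      rw [_root_.mem_closure_iff]
      intro V hV haV
      rcases h V ⟨hV, haV⟩ with ⟨y, hy1, hy2⟩
      exact ⟨y, hy2, hy1⟩
    obtain ⟨hAne, hAcl, hAinv, hmin⟩ := hA
    have hB := hmin (A ∩ closure (reach F x)) inter_subset_left ⟨a, ha, haC⟩
      (hAcl.inter isClosed_closure) ?_
    · intro y hy
      have : y ∈ A ∩ closure (reach F x) := hB.symm ▸ hy
      exact this.2
    · intro w hw
      rcases mem_iUnion₂.1 hw with ⟨b, hb, hwb⟩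
      exact ⟨hAinv (mem_iUnion₂.2 ⟨b, hb.1, hwb⟩), hinv (mem_iUnion₂.2 ⟨b, hb.2, hwb⟩)⟩
end

section
/- Let X be a metric space, F : X ⇉ X lower semicontinuous, and A a minimal set of F. Then the weak basin B(A) = {x : A ⊆ closure(Reach(F,x))} is open if and only if B(A) is a neighborhood of some point a ∈ A. -/
open Metric Set

lemma img_mono' {X Y : Type*} (F : X → Set Y) {S T : Set X} (h : S ⊆ T) :
    img F S ⊆ img F T := by
  intro y hy
  simp only [img, mem_iUnion, exists_prop] at *
  obtain ⟨s, hs, h2⟩ := hy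
  exact ⟨s, h hs, h2⟩

lemma iter_trans' {X : Type*} (F : X → Set X) {x y : X} {n : ℕ} (hy : y ∈ iter F n x) :
    ∀ m, iter F m y ⊆ iter F (n + m) x := by
  intro m
  induction m with
  | zero =>
    intro z hz
    simp only [iter, mem_singleton_iff] at hz
    subst hz; simpa using hy
  | succ m ih =>
    intro z hz
    exact img_mono' F ih hz

lemma reach_trans' {X : Type*} (F : X → Set X) {x y : X} (hy : y ∈ reach F x) :
    reach F y ⊆ reach F x := by
  simp only [reach, mem_iUnion] at hy
  obtain ⟨n, hn⟩ := hy
  intro z hz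
  simp only [reach, mem_iUnion] at hz ⊢
  obtain ⟨m, hm⟩ := hz
  exact ⟨n + m, iter_trans' F hn m hm⟩

lemma lsc_iter' {X : Type*} [TopologicalSpace X] {F : X → Set X} (hF : LSC F) :
    ∀ (n : ℕ) (V : Set X), IsOpen V → IsOpen {x | (iter F n x ∩ V).Nonempty} := by
  intro n
  induction n with
  | zero =>
    intro V hV
    convert hV using 1
    ext x
    simp [iter, singleton_inter_nonempty]
  | succ n ih =>
    intro V hV
    have : {x | (iter F (n+1) x ∩ V).Nonempty}
        = {x | (iter F n x ∩ {w | (F w ∩ V).Nonempty}).Nonempty} := by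
      ext x
      constructor
      · rintro ⟨z, hz, hzV⟩
        simp only [iter, img, mem_iUnion, exists_prop] at hz
        obtain ⟨s, hs, hzs⟩ := hz
        exact ⟨s, hs, z, hzs, hzV⟩
      · rintro ⟨s, hs, z, hzs, hzV⟩
        refine ⟨z, ?_, hzV⟩
        simp only [iter, img, mem_iUnion, exists_prop]
        exact ⟨s, hs, hzs⟩
    rw [this]
    exact ih _ (hF V hV)

lemma lsc_closure' {X : Type*} [TopologicalSpace X] {F : X → Set X} (hF : LSC F)
    {S : Set X} : img F (closure S) ⊆ closure (img F S) := by
  rintro y hy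
  simp only [img, mem_iUnion, exists_prop] at hy
  obtain ⟨x, hx, hyx⟩ := hy
  rw [_root_.mem_closure_iff]
  intro V hV hyV
  have hx' : x ∈ {z | (F z ∩ V).Nonempty} := ⟨y, hyx, hyV⟩
  rcases _root_.mem_closure_iff.mp hx _ (hF V hV) hx' with ⟨s, hsF, hsS⟩
  obtain ⟨w, hw, hwV⟩ := hsF
  exact ⟨w, hwV, by simp only [img, mem_iUnion, exists_prop]; exact ⟨s, hsS, hw⟩⟩

lemma subinv_reach' {X : Type*} (F : X → Set X) (x : X) :
    img F (reach F x) ⊆ reach F x := by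
  rintro y hy
  simp only [img, mem_iUnion, exists_prop] at hy
  obtain ⟨s, hs, hys⟩ := hy
  simp only [reach, mem_iUnion] at hs ⊢
  obtain ⟨n, hn⟩ := hs
  refine ⟨n + 1, ?_⟩
  simp only [iter, img, mem_iUnion, exists_prop]
  exact ⟨s, hn, hys⟩

lemma mem_basin' {X : Type*} [TopologicalSpace X] {F : X → Set X} (hF : LSC F)
    {A : Set X} (hA : MinimalSet F A) {a : X} (ha : a ∈ A) :
    A ⊆ closure (reach F a) := by
  obtain ⟨hne, hcl, hsub, hmin⟩ := hA
  have hselfreach : a ∈ reach F a := by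
    simp only [reach, mem_iUnion]; exact ⟨0, by simp [iter]⟩
  have hC : SubInv F (closure (reach F a)) := by
    refine (lsc_closure' hF).trans (closure_mono (subinv_reach' F a))
  have := hmin (A ∩ closure (reach F a)) inter_subset_left
    ⟨a, ha, subset_closure hselfreach⟩ (hcl.inter isClosed_closure)
    (fun y hy => by
      simp only [img, mem_iUnion, exists_prop] at hy
      obtain ⟨s, ⟨hsA, hsC⟩, hys⟩ := hy
      refine ⟨hsub ?_, hC ?_⟩ <;>
        · simp only [img, mem_iUnion, exists_prop]; exact ⟨s, by assumption, hys⟩)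
  intro z hz
  rw [← this] at hz
  exact hz.2

theorem stmt13 {X : Type*} [MetricSpace X] (F : X → Set X)
    (hne : ∀ x, (F x).Nonempty) (hF : LSC F) (A : Set X) (hA : MinimalSet F A) :
    IsOpen {x | A ⊆ closure (reach F x)} ↔
      ∃ a ∈ A, {x | A ⊆ closure (reach F x)} ∈ nhds a := by
  constructor
  · intro hopen
    obtain ⟨a, ha⟩ := hA.1
    exact ⟨a, ha, hopen.mem_nhds (mem_basin' hF hA ha)⟩
  · rintro ⟨a, haA, hnh⟩
    set B := {x | A ⊆ closure (reach F x)} with hB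
    rw [isOpen_iff_forall_mem_open]
    intro x hx
    have haU : a ∈ interior B := mem_interior_iff_mem_nhds.mpr hnh
    have haC : a ∈ closure (reach F x) := hx haA
    rcases _root_.mem_closure_iff.mp haC _ isOpen_interior haU with ⟨y, hyU, hyR⟩
    simp only [reach, mem_iUnion] at hyR
    obtain ⟨n, hyn⟩ := hyR
    refine ⟨{z | (iter F n z ∩ interior B).Nonempty}, ?_, lsc_iter' hF n _ isOpen_interior,
      ⟨y, hyn, hyU⟩⟩
    rintro z ⟨y', hy'n, hy'U⟩
    have hy'B : y' ∈ B := interior_subset hy'U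
    have hy'reach : y' ∈ reach F z := by
      simp only [reach, mem_iUnion]; exact ⟨n, hy'n⟩
    exact Set.Subset.trans hy'B (closure_mono (reach_trans' F hy'reach))
end

section
/- Let X be a compact metric space and F : X ⇉ X a multifunction. For any x ∈ X: ChainReach(F,x) = closure(Reach(F,x)) if and only if for every ε > 0 there exists δ > 0 such that Reach(F_δ, x) := ⋃_{n≥0} F_δ^{∘n}(x) ⊆ B_ε(Reach(F,x)). -/
open Metric Set

lemma iter_mono {X : Type*} {F G : X → Set X} (h : ∀ y, F y ⊆ G y) (n : ℕ) (x : X) :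
    iter F n x ⊆ iter G n x := by
  induction n with
  | zero => simp [iter]
  | succ n ih =>
    intro z hz
    obtain ⟨w, hw, hzw⟩ := by simpa [iter, img] using hz
    exact Set.mem_iUnion₂.2 ⟨w, ih hw, h w hzw⟩

lemma reach_mono {X : Type*} {F G : X → Set X} (h : ∀ y, F y ⊆ G y) (x : X) :
    reach F x ⊆ reach G x :=
  Set.iUnion_mono fun n => iter_mono h n x

lemma pert_mono {X : Type*} [MetricSpace X] (F : X → Set X) {δ δ' : ℝ} (h : δ ≤ δ') (y : X) :
    pert F δ y ⊆ pert F δ' y := Metric.thickening_mono h _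

lemma self_subset_pert {X : Type*} [MetricSpace X] (F : X → Set X) {δ : ℝ} (h : 0 < δ) (y : X) :
    F y ⊆ pert F δ y := Metric.self_subset_thickening h _

lemma mem_reach_self {X : Type*} (F : X → Set X) (x : X) : x ∈ reach F x :=
  Set.mem_iUnion.2 ⟨0, by simp [iter]⟩

lemma closure_reach_pert_subset {X : Type*} [MetricSpace X] (F : X → Set X) (x : X)
    {δ' δ : ℝ} (h0 : 0 < δ') (h : δ' < δ) :
    closure (reach (pert F δ') x) ⊆ reach (pert F δ) x := by
  intro y hy
  by_cases hyx : y = x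
  · subst hyx; exact mem_reach_self _ _
  · have hd : 0 < dist y x := dist_pos.2 hyx
    have hr : (0:ℝ) < min (δ - δ') (dist y x) := lt_min (by linarith) hd
    obtain ⟨z, hz, hdz⟩ := Metric.mem_closure_iff.1 hy _ hr
    obtain ⟨n, hzn⟩ := Set.mem_iUnion.1 hz
    match n, hzn with
    | 0, hzn =>
      simp only [iter, Set.mem_singleton_iff] at hzn
      exact absurd (hzn ▸ hdz) (by simp [le_min_iff])
    | m + 1, hzn =>
      obtain ⟨w, hw, hzw⟩ := Set.mem_iUnion₂.1 hzn
      obtain ⟨u, hu, hdu⟩ := Metric.mem_thickening_iff.1 hzw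
      have hyu : dist y u < δ := by
        have := dist_triangle y z u
        have h1 : dist y z < δ - δ' := lt_of_lt_of_le hdz (min_le_left _ _)
        linarith
      have : y ∈ pert F δ w := Metric.mem_thickening_iff.2 ⟨u, hu, hyu⟩
      exact Set.mem_iUnion.2 ⟨m + 1,
        Set.mem_iUnion₂.2 ⟨w, iter_mono (pert_mono F h.le) m x hw, this⟩⟩

theorem stmt15 {X : Type*} [MetricSpace X] [CompactSpace X] (F : X → Set X)
    (hne : ∀ x, (F x).Nonempty) (x : X) :
    chainReach F x = closure (reach F x) ↔
      ∀ ε > (0 : ℝ), ∃ δ > (0 : ℝ),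
        reach (pert F δ) x ⊆ Metric.thickening ε (reach F x) := by
  have hsub : closure (reach F x) ⊆ chainReach F x := by
    intro y hy
    refine Set.mem_iInter₂.2 fun ε hε => ?_
    have h1 : reach F x ⊆ reach (pert F (ε/2)) x :=
      reach_mono (fun z => self_subset_pert F (by linarith) z) x
    exact closure_reach_pert_subset F x (by linarith) (by linarith)
      (closure_mono h1 hy)
  constructor
  · intro heq ε hε
    by_contra hcon
    push_neg at hcon
    have hcon' : ∀ n : ℕ, ∃ y, y ∈ reach (pert F (1 / (n + 1))) x ∧
        y ∉ Metric.thickening ε (reach F x) := by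
      intro n
      have := hcon (1 / (n + 1)) (by positivity)
      rw [Set.not_subset] at this
      exact this.imp fun a ⟨h1, h2⟩ => ⟨h1, h2⟩
    choose y hy hny using hcon'
    obtain ⟨a, -, φ, hφ, hlim⟩ := isCompact_univ.tendsto_subseq (fun n => Set.mem_univ (y n))
    -- a is not in the thickening
    have hna : a ∉ Metric.thickening ε (reach F x) := by
      have hcl : IsClosed (Metric.thickening ε (reach F x))ᶜ :=
        Metric.isOpen_thickening.isClosed_compl
      exact hcl.mem_of_tendsto hlim (Filter.Eventually.of_forall fun k => hny (φ k))
    -- a is in the chain reachable set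
    have ha : a ∈ chainReach F x := by
      refine Set.mem_iInter₂.2 fun η hη => ?_
      refine closure_reach_pert_subset F x (show (0:ℝ) < η/2 by linarith) (by linarith) ?_
      obtain ⟨N, hN⟩ := exists_nat_gt (2 / η)
      refine mem_closure_of_tendsto ((hlim.comp (Filter.tendsto_add_atTop_nat N)))
        (Filter.Eventually.of_forall fun k => ?_)
      have hkN : (N : ℝ) ≤ (φ (k + N) : ℝ) := by
        exact_mod_cast le_trans (Nat.le_add_left N k) (hφ.le_apply)
      have hlt : 1 / ((φ (k + N) : ℝ) + 1) ≤ η / 2 := by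
        rw [div_le_iff₀ (by positivity)]
        have h2 : 2 / η ≤ (φ (k + N) : ℝ) + 1 := by linarith [hN]
        have := (div_le_iff₀ hη).1 h2
        nlinarith
      exact reach_mono (fun z => pert_mono F hlt z) x (hy (φ (k + N)))
    rw [heq] at ha
    obtain ⟨z, hz, hdz⟩ := Metric.mem_closure_iff.1 ha ε hε
    exact hna (Metric.mem_thickening_iff.2 ⟨z, hz, hdz⟩)
  · intro h
    refine Set.Subset.antisymm ?_ hsub
    intro y hy
    rw [Metric.mem_closure_iff]
    intro r hr
    obtain ⟨δ, hδ, hδsub⟩ := h r hr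
    have : y ∈ reach (pert F δ) x := Set.mem_iInter₂.1 hy δ hδ
    obtain ⟨z, hz, hdz⟩ := Metric.mem_thickening_iff.1 (hδsub this)
    exact ⟨z, hz, hdz⟩
end
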